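/- arXiv:2401.09111 — 4 statements merged into one kernel-verified Lean document; each statement's English description precedes it below -/
import Mathlib

section
/- Let N be a positive integer, let x ∈ ℝ^N with x ≠ 0, and let ᾱ > 0 and β > 0. Then there exists a unique μ* > 0 such that ψ(μ*) = 0, where ψ(μ) = ∑_{i=1}^N max(0, √(ᾱβ/2)·|x_i|/√μ − ᾱβ) − 1. Equivalently, there is a unique μ* > 0 such that ∑_{i=1}^N max(0, √(ᾱβ/2)·|x_i|/√μ* − ᾱβ) = 1. -/
open Finset

/-!
Writing `s = 1/√μ`, the sum becomes `F s = ∑ᵢ max 0 (aᵢ s - b)` with `aᵢ = √(ᾱβ/2)|xᵢ| ≥ 0`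
and `b = ᾱβ > 0`. This is a continuous, nondecreasing function with `F 0 = 0`, and it is
unbounded since some `aᵢ > 0`; so it takes the value `1` by the intermediate value theorem.
Wherever `F` is positive some summand is active, and that summand is strictly increasing,
so `F` is strictly increasing on `{F > 0}` and the value `1` is taken only once.
-/

def hingeSum {ι : Type*} [Fintype ι] (a : ι → ℝ) (b s : ℝ) : ℝ :=
  ∑ i, max 0 (a i * s - b)

namespace hingeSum

variable {ι : Type*} [Fintype ι] {a : ι → ℝ} {b : ℝ}

theorem continuous (a : ι → ℝ) (b : ℝ) : Continuous (hingeSum a b) := by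
  unfold hingeSum
  fun_prop

theorem eq_zero_of_nonpos (ha : ∀ i, 0 ≤ a i) (hb : 0 ≤ b) {s : ℝ} (hs : s ≤ 0) :
    hingeSum a b s = 0 :=
  sum_eq_zero fun i _ => max_eq_left (by nlinarith [ha i])

theorem monotone (ha : ∀ i, 0 ≤ a i) : Monotone (hingeSum a b) := fun _ _ hst =>
  sum_le_sum fun i _ => max_le_max le_rfl (by nlinarith [ha i])

theorem sub_le (i : ι) (s : ℝ) : a i * s - b ≤ hingeSum a b s :=
  (le_max_right _ _).trans <|
    single_le_sum (f := fun j => max 0 (a j * s - b)) (fun _ _ => le_max_left _ _) (mem_univ i)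

theorem strictMonoOn (ha : ∀ i, 0 ≤ a i) (hb : 0 ≤ b) :
    StrictMonoOn (hingeSum a b) {s | 0 < hingeSum a b s} := by
  intro u hu t _ hut
  obtain ⟨i, -, hi⟩ := exists_lt_of_sum_lt (by simpa [hingeSum] using hu :
    ∑ _i : ι, (0 : ℝ) < hingeSum a b u)
  have hactive : b < a i * u := by
    by_contra! h
    exact hi.ne' (max_eq_left (by linarith))
  -- an active summand has positive slope, because `b ≥ 0`
  have hai : 0 < a i := lt_of_le_of_ne (ha i) fun h => by rw [← h] at hactive; linarith
  refine sum_lt_sum (fun j _ => max_le_max le_rfl ?_) ⟨i, mem_univ i, ?_⟩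
  · nlinarith [ha j]
  · rw [max_eq_right (by linarith), max_eq_right (by nlinarith)]
    nlinarith

theorem exists_pos_eq (ha : ∀ i, 0 ≤ a i) (hb : 0 ≤ b) {i : ι} (hai : 0 < a i) {c : ℝ}
    (hc : 0 < c) : ∃ s, 0 < s ∧ hingeSum a b s = c := by
  set S := (c + b) / a i
  have hS : c ≤ hingeSum a b S := by
    have := sub_le (a := a) (b := b) i S
    rwa [mul_div_cancel₀ _ hai.ne', add_sub_cancel_right] at this
  obtain ⟨s, -, hs⟩ := intermediate_value_Icc (div_nonneg (by linarith) hai.le)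
    (continuous a b).continuousOn ⟨(eq_zero_of_nonpos ha hb le_rfl).trans_le hc.le, hS⟩
  refine ⟨s, lt_of_not_ge fun hs0 => ?_, hs⟩
  linarith [eq_zero_of_nonpos ha hb hs0]

theorem existsUnique_pos_eq (ha : ∀ i, 0 ≤ a i) (hb : 0 ≤ b) {i : ι} (hai : 0 < a i) {c : ℝ}
    (hc : 0 < c) : ∃! s, 0 < s ∧ hingeSum a b s = c := by
  obtain ⟨s, hs, hsc⟩ := exists_pos_eq ha hb hai hc
  refine ⟨s, ⟨hs, hsc⟩, fun t ⟨_, htc⟩ => (strictMonoOn ha hb).injOn ?_ ?_ (htc.trans hsc.symm)⟩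
  · exact (htc.symm ▸ hc : 0 < hingeSum a b t)
  · exact (hsc.symm ▸ hc : 0 < hingeSum a b s)

end hingeSum

theorem existsUnique_pos_inv_sqrt {P : ℝ → Prop} (h : ∃! s, 0 < s ∧ P s) :
    ∃! μ, 0 < μ ∧ P (√μ)⁻¹ := by
  obtain ⟨s, ⟨hs, hPs⟩, huniq⟩ := h
  refine ⟨(s⁻¹) ^ 2, ⟨by positivity, ?_⟩, fun μ ⟨hμ, hPμ⟩ => ?_⟩
  · rwa [Real.sqrt_sq (by positivity), inv_inv]
  · rw [← huniq _ ⟨by positivity, hPμ⟩, inv_inv, Real.sq_sqrt hμ.le]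

theorem psi_exists_unique_positive_zero_general (N : ℕ) (x : Fin N → ℝ) (hx : x ≠ 0)
    (α β : ℝ) (hα : 0 < α) (hβ : 0 < β) :
    ∃! μ : ℝ, 0 < μ ∧
      (∑ i : Fin N, max 0 (Real.sqrt (α * β / 2) * |x i| / Real.sqrt μ - α * β)) = 1 := by
  have hαβ : 0 < α * β := mul_pos hα hβ
  obtain ⟨i, hi⟩ := Function.ne_iff.mp hx
  have hai : 0 < √(α * β / 2) * |x i| := mul_pos (by positivity) (abs_pos.2 hi)
  have key := hingeSum.existsUnique_pos_eq (a := fun i => √(α * β / 2) * |x i|)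
    (fun _ => by positivity) hαβ.le hai one_pos
  simpa only [hingeSum, div_eq_mul_inv] using existsUnique_pos_inv_sqrt key

/-- For `x ≠ 0` there is a unique `μ* > 0` with
`∑_{i=1}^N max(0, √(ᾱβ/2)·|x_i|/√μ* − ᾱβ) = 1`, i.e. `ψ(μ*) = 0`. -/
theorem psi_exists_unique_positive_zero (N : ℕ) (hN : 0 < N) (x : Fin N → ℝ) (hx : x ≠ 0)
    (α β : ℝ) (hα : 0 < α) (hβ : 0 < β) :
    ∃! μ : ℝ, 0 < μ ∧
      (∑ i : Fin N, max 0 (Real.sqrt (α * β / 2) * |x i| / Real.sqrt μ - α * β)) = 1 :=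
  psi_exists_unique_positive_zero_general N x hx α β hα hβ
end

section
/- Let N be a positive integer, x ∈ ℝ^N with x ≠ 0, and ᾱ > 0, β > 0. Let μ* > 0 satisfy ∑_{i=1}^N max(0, √(ᾱβ/2)·|x_i|/√μ* − ᾱβ) = 1, and set λ_i := max(0, √(ᾱβ/2)·|x_i|/√μ* − ᾱβ) for i = 1,…,N. Then the vector u* ∈ ℝ^N with components u*_i = λ_i x_i/(λ_i + ᾱβ) is the unique minimizer over ℝ^N of the function u ↦ (1/2)|u − x|₂² + (ᾱβ/2)|u|₁², where |u|₂ is the Euclidean norm and |u|₁ = ∑_{i=1}^N |u_i|. -/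
/-!
Write `c = ᾱβ` and `κ = √(ᾱβ/2)/√μ*`. Coordinatewise, `u*ᵢ` is the soft-thresholding of `xᵢ` at
level `c/κ`, so `u*` minimizes `½|u - x|₂² + (c/κ)|u|₁`; moreover `|u*ᵢ| = λᵢ/κ`, so the equation
`∑ λᵢ = 1` says exactly that `|u*|₁ = 1/κ`, i.e. the threshold equals `c|u*|₁`. Since
`(c/2)s² ≥ c t s - (c/2)t²`, with equality at `s = t`, a minimizer of the ℓ¹-penalized problem with
weight `c t`, `t = |u*|₁`, also minimizes the problem penalized by `(c/2)|u|₁²`. Uniqueness follows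
from strict convexity of the objective.
-/

open Finset Set

noncomputable def proxObjective {ι : Type*} [Fintype ι] (x : ι → ℝ) (c : ℝ) (u : ι → ℝ) : ℝ :=
  (1 / 2) * (∑ i, (u i - x i) ^ 2) + (c / 2) * (∑ i, |u i|) ^ 2

section Scalar

variable {a c κ l : ℝ}

lemma half_sq_sub_add_mul_abs_le_of_subgradient {τ v g : ℝ} (hτ : 0 ≤ τ) (hg : |g| ≤ 1)
    (hgv : g * v = |v|) (hopt : v + τ * g = a) (u : ℝ) :
    1 / 2 * (v - a) ^ 2 + τ * |v| ≤ 1 / 2 * (u - a) ^ 2 + τ * |u| := by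
  have hgu : g * u ≤ |u| :=
    (le_abs_self _).trans (by rw [abs_mul]; exact mul_le_of_le_one_left (abs_nonneg u) hg)
  subst hopt
  nlinarith [sq_nonneg (u - v), mul_nonneg hτ (sub_nonneg.2 hgu)]

lemma abs_mul_div_add_of_eq_max (hc : 0 < c) (hκ : 0 < κ) (hl : l = max 0 (κ * |a| - c)) :
    |l * a / (l + c)| = l / κ := by
  rcases le_or_gt (κ * |a|) c with hle | hlt
  · rw [hl, max_eq_left (by linarith)]
    simp
  · have hl' : l + c = κ * |a| := by rw [hl, max_eq_right (by linarith)]; ring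
    have ha : 0 < |a| := pos_of_mul_pos_right (hc.trans hlt) hκ.le
    rw [hl', abs_div, abs_mul, abs_of_nonneg (hl ▸ le_max_left _ _), abs_of_pos (mul_pos hκ ha)]
    field_simp

/-- `l * a / (l + c)` is the soft-thresholding of `a` at level `c / κ`. -/
lemma mul_div_add_minimizes_of_eq_max (hc : 0 < c) (hκ : 0 < κ)
    (hl : l = max 0 (κ * |a| - c)) (u : ℝ) :
    1 / 2 * (l * a / (l + c) - a) ^ 2 + c / κ * |l * a / (l + c)|
      ≤ 1 / 2 * (u - a) ^ 2 + c / κ * |u| := by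
  have hτ : 0 ≤ c / κ := by positivity
  rcases le_or_gt (κ * |a|) c with hle | hlt
  · have hl0 : l = 0 := by rw [hl, max_eq_left (by linarith)]
    refine half_sq_sub_add_mul_abs_le_of_subgradient (g := κ * a / c) hτ ?_ (by simp [hl0]) ?_ u
    · rw [abs_div, abs_mul, abs_of_pos hκ, abs_of_pos hc, div_le_one hc]
      exact hle
    · rw [hl0]
      field_simp
      ring
  · have hl' : l + c = κ * |a| := by rw [hl, max_eq_right (by linarith)]; ring
    have ha : 0 < |a| := pos_of_mul_pos_right (hc.trans hlt) hκ.le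
    refine half_sq_sub_add_mul_abs_le_of_subgradient (g := a / |a|) hτ
      (by rw [abs_div, abs_abs, div_self ha.ne']) ?_ ?_ u
    · rw [abs_mul_div_add_of_eq_max hc hκ hl, hl']
      field_simp
      rw [sq_abs]
    · rw [hl', hl, max_eq_right (by linarith)]
      field_simp
      ring

end Scalar

section Convexity

variable {ι : Type*} [Fintype ι]

lemma strictConvexOn_half_sum_sq_sub (x : ι → ℝ) :
    StrictConvexOn ℝ univ fun u : ι → ℝ ↦ 1 / 2 * ∑ i, (u i - x i) ^ 2 := by
  refine ⟨convex_univ, fun u _ v _ huv a b ha hb hab ↦ ?_⟩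
  obtain ⟨j, hj⟩ : ∃ j, u j ≠ v j := Function.ne_iff.1 huv
  have hgap : ∀ i, a * (u i - x i) ^ 2 + b * (v i - x i) ^ 2 - ((a * u i + b * v i) - x i) ^ 2
      = a * b * (u i - v i) ^ 2 := fun i ↦ by
    obtain rfl : b = 1 - a := by linarith
    ring
  simp only [Pi.add_apply, Pi.smul_apply, smul_eq_mul, mul_sum, ← sum_add_distrib]
  refine sum_lt_sum (fun i _ ↦ ?_) ⟨j, mem_univ j, ?_⟩
  · nlinarith [hgap i, mul_nonneg (mul_nonneg ha.le hb.le) (sq_nonneg (u i - v i))]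
  · nlinarith [hgap j, mul_pos (mul_pos ha hb) (pow_two_pos_of_ne_zero (sub_ne_zero.2 hj))]

lemma convexOn_sum_abs : ConvexOn ℝ univ fun u : ι → ℝ ↦ ∑ i, |u i| := by
  refine ⟨convex_univ, fun u _ v _ a b ha hb _ ↦ ?_⟩
  simp only [Pi.add_apply, Pi.smul_apply, smul_eq_mul, mul_sum, ← sum_add_distrib]
  refine sum_le_sum fun i _ ↦ (abs_add_le _ _).trans_eq ?_
  rw [abs_mul, abs_mul, abs_of_nonneg ha, abs_of_nonneg hb]

lemma strictConvexOn_proxObjective (x : ι → ℝ) {c : ℝ} (hc : 0 ≤ c) :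
    StrictConvexOn ℝ univ (proxObjective x c) :=
  (strictConvexOn_half_sum_sq_sub x).add_convexOn
    (((convexOn_sum_abs.pow fun _ _ ↦ sum_nonneg fun _ _ ↦ abs_nonneg _) 2).smul
      (div_nonneg hc zero_le_two))

end Convexity

lemma le_add_half_sq_of_le_add_mul {E : Type*} {F n : E → ℝ} {c τ : ℝ} {v : E} (hc : 0 ≤ c)
    (hτ : τ = c * n v) (h : ∀ u, F v + τ * n v ≤ F u + τ * n u) (u : E) :
    F v + c / 2 * n v ^ 2 ≤ F u + c / 2 * n u ^ 2 := by
  subst hτ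
  nlinarith [h u, mul_nonneg hc (sq_nonneg (n u - n v))]

lemma half_sum_sq_sub_add_mul_sum_abs_le {ι : Type*} [Fintype ι] {x v : ι → ℝ} {τ : ℝ}
    (h : ∀ i w, 1 / 2 * (v i - x i) ^ 2 + τ * |v i| ≤ 1 / 2 * (w - x i) ^ 2 + τ * |w|)
    (u : ι → ℝ) :
    1 / 2 * ∑ i, (v i - x i) ^ 2 + τ * ∑ i, |v i|
      ≤ 1 / 2 * ∑ i, (u i - x i) ^ 2 + τ * ∑ i, |u i| := by
  simp only [mul_sum, ← sum_add_distrib]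
  exact sum_le_sum fun i _ ↦ h i (u i)

theorem prox_sq_l1_formula_general (N : ℕ) (x : Fin N → ℝ)
    (α β : ℝ) (hα : 0 < α) (hβ : 0 < β) (μstar : ℝ) (hμ : 0 < μstar)
    (hzero : (∑ i : Fin N,
        max 0 (Real.sqrt (α * β / 2) * |x i| / Real.sqrt μstar - α * β)) = 1)
    (lam : Fin N → ℝ)
    (hlam : ∀ i, lam i = max 0 (Real.sqrt (α * β / 2) * |x i| / Real.sqrt μstar - α * β))
    (ustar : Fin N → ℝ)
    (hustar : ∀ i, ustar i = lam i * x i / (lam i + α * β)) :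
    (∀ u : Fin N → ℝ,
        (1 / 2) * (∑ i : Fin N, (ustar i - x i) ^ 2)
          + (α * β / 2) * (∑ i : Fin N, |ustar i|) ^ 2
        ≤ (1 / 2) * (∑ i : Fin N, (u i - x i) ^ 2)
          + (α * β / 2) * (∑ i : Fin N, |u i|) ^ 2) ∧
    (∀ u : Fin N → ℝ,
        (∀ w : Fin N → ℝ,
          (1 / 2) * (∑ i : Fin N, (u i - x i) ^ 2)
            + (α * β / 2) * (∑ i : Fin N, |u i|) ^ 2
          ≤ (1 / 2) * (∑ i : Fin N, (w i - x i) ^ 2)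
            + (α * β / 2) * (∑ i : Fin N, |w i|) ^ 2) → u = ustar) := by
  have hc : 0 < α * β := mul_pos hα hβ
  set κ := Real.sqrt (α * β / 2) / Real.sqrt μstar
  have hκ : 0 < κ := div_pos (Real.sqrt_pos.2 (half_pos hc)) (Real.sqrt_pos.2 hμ)
  have hlam' : ∀ i, lam i = max 0 (κ * |x i| - α * β) := fun i ↦ by rw [hlam, mul_div_right_comm]
  have hnorm : ∑ i, |ustar i| = 1 / κ := by
    rw [sum_congr rfl fun i _ ↦ by rw [hustar, abs_mul_div_add_of_eq_max hc hκ (hlam' i)],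
      ← sum_div, sum_congr rfl fun i _ ↦ hlam i, hzero]
  have hmin : ∀ u, proxObjective x (α * β) ustar ≤ proxObjective x (α * β) u :=
    le_add_half_sq_of_le_add_mul (F := fun u : Fin N → ℝ ↦ 1 / 2 * ∑ i, (u i - x i) ^ 2)
      (n := fun u : Fin N → ℝ ↦ ∑ i, |u i|) (τ := α * β / κ) hc.le
      (by rw [hnorm, mul_one_div])
      (half_sum_sq_sub_add_mul_sum_abs_le fun i w ↦ by
        rw [hustar]
        exact mul_div_add_minimizes_of_eq_max hc hκ (hlam' i) w)
  exact ⟨hmin, fun u hu ↦ (strictConvexOn_proxObjective x hc.le).eq_of_isMinOn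
    (isMinOn_univ_iff.2 hu) (isMinOn_univ_iff.2 hmin) (mem_univ u) (mem_univ ustar)⟩

/-- With `μ* > 0` the positive zero of `ψ` and
`λ_i = max(0, √(ᾱβ/2)·|x_i|/√μ* − ᾱβ)`, the vector with components
`u*_i = λ_i x_i/(λ_i + ᾱβ)` is the unique minimizer over `ℝ^N` of
`u ↦ (1/2)|u − x|₂² + (ᾱβ/2)|u|₁²`. -/
theorem prox_sq_l1_formula (N : ℕ) (hN : 0 < N) (x : Fin N → ℝ) (hx : x ≠ 0)
    (α β : ℝ) (hα : 0 < α) (hβ : 0 < β) (μstar : ℝ) (hμ : 0 < μstar)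
    (hzero : (∑ i : Fin N,
        max 0 (Real.sqrt (α * β / 2) * |x i| / Real.sqrt μstar - α * β)) = 1)
    (lam : Fin N → ℝ)
    (hlam : ∀ i, lam i = max 0 (Real.sqrt (α * β / 2) * |x i| / Real.sqrt μstar - α * β))
    (ustar : Fin N → ℝ)
    (hustar : ∀ i, ustar i = lam i * x i / (lam i + α * β)) :
    (∀ u : Fin N → ℝ,
        (1 / 2) * (∑ i : Fin N, (ustar i - x i) ^ 2)
          + (α * β / 2) * (∑ i : Fin N, |ustar i|) ^ 2
        ≤ (1 / 2) * (∑ i : Fin N, (u i - x i) ^ 2)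
          + (α * β / 2) * (∑ i : Fin N, |u i|) ^ 2) ∧
    (∀ u : Fin N → ℝ,
        (∀ w : Fin N → ℝ,
          (1 / 2) * (∑ i : Fin N, (u i - x i) ^ 2)
            + (α * β / 2) * (∑ i : Fin N, |u i|) ^ 2
          ≤ (1 / 2) * (∑ i : Fin N, (w i - x i) ^ 2)
            + (α * β / 2) * (∑ i : Fin N, |w i|) ^ 2) → u = ustar) :=
  prox_sq_l1_formula_general N x α β hα hβ μstar hμ hzero lam hlam ustar hustar
end

section
/- Let N be a positive integer, x ∈ ℝ^N with x ≠ 0, and ᾱ > 0, β > 0. Let μ* > 0 satisfy ∑_{i=1}^N max(0, √(ᾱβ/2)·|x_i|/√μ* − ᾱβ) = 1, and let u* ∈ ℝ^N be the unique minimizer over ℝ^N of u ↦ (1/2)|u − x|₂² + (ᾱβ/2)|u|₁². Then for every index i, the i-th component of u* is nonzero if and only if √(ᾱβ/2)·|x_i|/√μ* − ᾱβ > 0. In particular, the number of nonzero components of u* equals the cardinality of the set {i ∈ {1,…,N} : √(ᾱβ/2)·|x_i|/√μ* − ᾱβ > 0}. -/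
/-! For `τ ≥ 0` the soft-thresholding `S_τ t = sign t · max 0 (|t| - τ)` is the proximal point of
`τ |·|` on `ℝ`. At `v` the functions `(c/2)|u|₁²` and `τ |u|₁` have the same subgradient when
`τ = c |v|₁`, so `S_τ x` minimizes `½|u - x|₂² + (c/2)|u|₁²` as soon as `c |S_τ x|₁ = τ`; the equation
`ψ(μ*) = 0` says exactly this for `τ = √(2 μ* c)`. By uniqueness `u* = S_τ x`, whose support is
`{i | τ < |x i|}`. -/

noncomputable def softThreshold (τ t : ℝ) : ℝ := Real.sign t * max 0 (|t| - τ)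

section softThreshold

variable {τ : ℝ}

theorem softThreshold_of_abs_le {t : ℝ} (h : |t| ≤ τ) : softThreshold τ t = 0 := by
  simp [softThreshold, max_eq_left (sub_nonpos.mpr h)]

theorem softThreshold_of_lt (hτ : 0 ≤ τ) {t : ℝ} (h : τ < t) : softThreshold τ t = t - τ := by
  have ht : 0 < t := hτ.trans_lt h
  simp [softThreshold, Real.sign_of_pos ht, abs_of_pos ht, h.le]

theorem softThreshold_of_lt_neg (hτ : 0 ≤ τ) {t : ℝ} (h : t < -τ) :
    softThreshold τ t = t + τ := by
  have ht : t < 0 := h.trans_le (neg_nonpos.mpr hτ)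
  simp only [softThreshold, Real.sign_of_neg ht, abs_of_neg ht,
    max_eq_right (by linarith : 0 ≤ -t - τ)]
  ring

theorem abs_softThreshold (hτ : 0 ≤ τ) (t : ℝ) : |softThreshold τ t| = max 0 (|t| - τ) := by
  rcases le_or_gt |t| τ with h | h
  · rw [softThreshold_of_abs_le h, abs_zero, max_eq_left (sub_nonpos.mpr h)]
  · rw [max_eq_right (sub_nonneg.mpr h.le)]
    rcases lt_abs.mp h with h' | h'
    · rw [softThreshold_of_lt hτ h', abs_of_pos (sub_pos.mpr h'), abs_of_pos (hτ.trans_lt h')]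
    · rw [softThreshold_of_lt_neg hτ (lt_neg_of_lt_neg h'), abs_of_neg (by linarith),
        abs_of_neg (by linarith)]
      ring

theorem softThreshold_ne_zero_iff (hτ : 0 ≤ τ) {t : ℝ} : softThreshold τ t ≠ 0 ↔ τ < |t| := by
  rw [← abs_pos, abs_softThreshold hτ, lt_max_iff, sub_pos]
  simp

theorem sub_softThreshold_mul_le (hτ : 0 ≤ τ) (t w : ℝ) :
    (t - softThreshold τ t) * (w - softThreshold τ t) ≤ τ * (|w| - |softThreshold τ t|) := by
  rcases le_or_gt |t| τ with h | h
  · rw [softThreshold_of_abs_le h, abs_zero]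
    nlinarith [abs_mul_abs_self t, le_abs_self (t * w), abs_mul t w, abs_nonneg w,
      mul_le_mul_of_nonneg_right h (abs_nonneg w)]
  · rcases lt_abs.mp h with h' | h'
    · rw [softThreshold_of_lt hτ h', abs_of_pos (sub_pos.mpr h')]
      nlinarith [mul_le_mul_of_nonneg_left (le_abs_self w) hτ]
    · rw [softThreshold_of_lt_neg hτ (lt_neg_of_lt_neg h'), abs_of_neg (by linarith : t + τ < 0)]
      nlinarith [mul_le_mul_of_nonneg_left (neg_abs_le w) hτ]

theorem softThreshold_sq_add_le (hτ : 0 ≤ τ) (t w : ℝ) :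
    1 / 2 * (softThreshold τ t - t) ^ 2 + τ * |softThreshold τ t|
      ≤ 1 / 2 * (w - t) ^ 2 + τ * |w| := by
  nlinarith [sub_softThreshold_mul_le hτ t w, sq_nonneg (w - softThreshold τ t)]

end softThreshold

noncomputable def sqL1Objective {ι : Type*} [Fintype ι] (x : ι → ℝ) (c : ℝ) (u : ι → ℝ) : ℝ :=
  1 / 2 * (∑ i, (u i - x i) ^ 2) + c / 2 * (∑ i, |u i|) ^ 2

theorem sqL1Objective_le_of_forall_le {ι : Type*} [Fintype ι] {x v : ι → ℝ} {c τ : ℝ}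
    (hc : 0 ≤ c)
    (hv : ∀ i t, 1 / 2 * (v i - x i) ^ 2 + τ * |v i| ≤ 1 / 2 * (t - x i) ^ 2 + τ * |t|)
    (hfix : c * ∑ i, |v i| = τ) (w : ι → ℝ) :
    sqL1Objective x c v ≤ sqL1Objective x c w := by
  have hsum := Finset.sum_le_sum fun i (_ : i ∈ Finset.univ) ↦ hv i (w i)
  simp only [Finset.sum_add_distrib, ← Finset.mul_sum] at hsum
  subst hfix
  unfold sqL1Objective
  nlinarith [mul_nonneg hc (sq_nonneg (∑ i, |w i| - ∑ i, |v i|))]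

theorem sqrt_half_mul_div_sqrt_sub {c μ : ℝ} (hc : 0 < c) (hμ : 0 < μ) (a : ℝ) :
    √(c / 2) * a / √μ - c = c / √(2 * μ * c) * (a - √(2 * μ * c)) := by
  have hs : 0 < √(2 * μ * c) := by positivity
  have hratio : √(c / 2) / √μ = c / √(2 * μ * c) := by
    rw [div_eq_div_iff (by positivity) hs.ne', ← Real.sqrt_mul (by positivity),
      show c / 2 * (2 * μ * c) = c ^ 2 * μ by ring, Real.sqrt_mul (by positivity),
      Real.sqrt_sq hc.le]
  rw [mul_sub, div_mul_cancel₀ _ hs.ne', ← hratio]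
  ring

theorem mul_sum_max_sub_eq_of_sum_max_eq_one {ι : Type*} [Fintype ι] {c μ : ℝ} (hc : 0 < c)
    (hμ : 0 < μ) {a : ι → ℝ} (h : ∑ i, max 0 (√(c / 2) * a i / √μ - c) = 1) :
    c * ∑ i, max 0 (a i - √(2 * μ * c)) = √(2 * μ * c) := by
  have hs : 0 < √(2 * μ * c) := by positivity
  have hmax (y : ℝ) : max 0 (c / √(2 * μ * c) * y) = c / √(2 * μ * c) * max 0 y := by
    rw [mul_max_of_nonneg _ _ (by positivity), mul_zero]
  simp only [sqrt_half_mul_div_sqrt_sub hc hμ, hmax, ← Finset.mul_sum] at h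
  rwa [div_mul_eq_mul_div, div_eq_one_iff_eq hs.ne'] at h

theorem prox_sq_l1_sparsity_general (N : ℕ) (x : Fin N → ℝ)
    (α β : ℝ) (hα : 0 < α) (hβ : 0 < β) (μstar : ℝ) (hμ : 0 < μstar)
    (hzero : (∑ i : Fin N,
        max 0 (Real.sqrt (α * β / 2) * |x i| / Real.sqrt μstar - α * β)) = 1)
    (ustar : Fin N → ℝ)
    (huniq : ∀ u : Fin N → ℝ,
        (∀ w : Fin N → ℝ,
          (1 / 2) * (∑ i : Fin N, (u i - x i) ^ 2)
            + (α * β / 2) * (∑ i : Fin N, |u i|) ^ 2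
          ≤ (1 / 2) * (∑ i : Fin N, (w i - x i) ^ 2)
            + (α * β / 2) * (∑ i : Fin N, |w i|) ^ 2) → u = ustar) :
    (∀ i : Fin N, ustar i ≠ 0 ↔
        0 < Real.sqrt (α * β / 2) * |x i| / Real.sqrt μstar - α * β) ∧
    {i : Fin N | ustar i ≠ 0}.ncard =
      {i : Fin N | 0 < Real.sqrt (α * β / 2) * |x i| / Real.sqrt μstar - α * β}.ncard := by
  have hc : 0 < α * β := mul_pos hα hβ
  set τ := √(2 * μstar * (α * β))
  have hτ : 0 < τ := by positivity
  have hfix : α * β * ∑ i, |softThreshold τ (x i)| = τ := by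
    simp only [abs_softThreshold hτ.le]
    exact mul_sum_max_sub_eq_of_sum_max_eq_one hc hμ hzero
  have hprox : (fun i ↦ softThreshold τ (x i)) = ustar :=
    huniq _ <| sqL1Objective_le_of_forall_le hc.le
      (fun i ↦ softThreshold_sq_add_le hτ.le (x i)) hfix
  have hsupport (i : Fin N) :
      ustar i ≠ 0 ↔ 0 < √(α * β / 2) * |x i| / √μstar - α * β := by
    rw [← hprox, softThreshold_ne_zero_iff hτ.le, sqrt_half_mul_div_sqrt_sub hc hμ,
      mul_pos_iff_of_pos_left (by positivity), sub_pos]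
  exact ⟨hsupport, congrArg Set.ncard (Set.ext hsupport)⟩

/-- If `μ* > 0` is the positive zero of `ψ` and `u*` is the unique
minimizer of `u ↦ (1/2)|u − x|₂² + (ᾱβ/2)|u|₁²`, then `u*_i ≠ 0` iff
`√(ᾱβ/2)·|x_i|/√μ* − ᾱβ > 0`; in particular the number of nonzero components of
`u*` equals the cardinality of `{i : √(ᾱβ/2)·|x_i|/√μ* − ᾱβ > 0}`. -/
theorem prox_sq_l1_sparsity (N : ℕ) (hN : 0 < N) (x : Fin N → ℝ) (hx : x ≠ 0)
    (α β : ℝ) (hα : 0 < α) (hβ : 0 < β) (μstar : ℝ) (hμ : 0 < μstar)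
    (hzero : (∑ i : Fin N,
        max 0 (Real.sqrt (α * β / 2) * |x i| / Real.sqrt μstar - α * β)) = 1)
    (ustar : Fin N → ℝ)
    (hmin : ∀ u : Fin N → ℝ,
        (1 / 2) * (∑ i : Fin N, (ustar i - x i) ^ 2)
          + (α * β / 2) * (∑ i : Fin N, |ustar i|) ^ 2
        ≤ (1 / 2) * (∑ i : Fin N, (u i - x i) ^ 2)
          + (α * β / 2) * (∑ i : Fin N, |u i|) ^ 2)
    (huniq : ∀ u : Fin N → ℝ,
        (∀ w : Fin N → ℝ,
          (1 / 2) * (∑ i : Fin N, (u i - x i) ^ 2)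
            + (α * β / 2) * (∑ i : Fin N, |u i|) ^ 2
          ≤ (1 / 2) * (∑ i : Fin N, (w i - x i) ^ 2)
            + (α * β / 2) * (∑ i : Fin N, |w i|) ^ 2) → u = ustar) :
    (∀ i : Fin N, ustar i ≠ 0 ↔
        0 < Real.sqrt (α * β / 2) * |x i| / Real.sqrt μstar - α * β) ∧
    {i : Fin N | ustar i ≠ 0}.ncard =
      {i : Fin N | 0 < Real.sqrt (α * β / 2) * |x i| / Real.sqrt μstar - α * β}.ncard :=
  prox_sq_l1_sparsity_general N x α β hα hβ μstar hμ hzero ustar huniq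
end

section
/- Let m, n be positive integers and 1 ≤ ℓ ≤ m, let z₁, …, z_n ∈ ℝ^m, α₁, …, α_n > 0, let W be a symmetric positive definite m×m real matrix with inner product (z,v)_W = zᵀWv and norm |z|_W, and let ℛψ = ∑_{j=1}^n α_j (ψ, z_j)_W z_j. Suppose ψ₁, …, ψ_m is a basis of ℝ^m that is orthonormal with respect to (·,·)_W and satisfies ℛψ_i = λ_i ψ_i with λ₁ ≥ λ₂ ≥ … ≥ λ_m. Then for every family φ₁, …, φ_ℓ ∈ ℝ^m that is orthonormal with respect to (·,·)_W, ∑_{j=1}^n α_j |z_j − ∑_{i=1}^ℓ (z_j, ψ_i)_W ψ_i|_W² ≤ ∑_{j=1}^n α_j |z_j − ∑_{i=1}^ℓ (z_j, φ_i)_W φ_i|_W²; that is, the eigenvectors of ℛ associated with the ℓ largest eigenvalues solve the POD basis minimization problem of rank ℓ. -/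
open Matrix Finset

/-!
Expanding the residual against a `W`-orthonormal family, the POD error of `φ₁, …, φ_ℓ` is
`∑ⱼ αⱼ |zⱼ|²_W - ∑ᵢ E(φᵢ)` with the captured energy `E(v) = ∑ⱼ αⱼ (zⱼ, v)²_W`, so it suffices
to maximize `∑ᵢ E(φᵢ)`. In the eigenbasis, `E(v) = ∑ₖ λₖ (v, ψₖ)²_W`, hence
`∑ᵢ E(φᵢ) = ∑ₖ λₖ tₖ` with `tₖ = ∑ᵢ (φᵢ, ψₖ)²_W`. Bessel and Parseval give `0 ≤ tₖ ≤ 1` and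
`∑ₖ tₖ = ℓ`, and among such weights `∑ₖ λₖ tₖ` is largest when `t` is the indicator of the
`ℓ` largest eigenvalues, which is the value attained by `ψ₁, …, ψ_ℓ`.
-/

lemma sum_mul_le_sum_of_separated {κ : Type*} [Fintype κ] (F : Finset κ) (lam t : κ → ℝ)
    (c : ℝ) (hF : ∀ k ∈ F, c ≤ lam k) (hFc : ∀ k ∉ F, lam k ≤ c)
    (ht0 : ∀ k, 0 ≤ t k) (ht1 : ∀ k, t k ≤ 1) (hsum : ∑ k, t k = #F) :
    ∑ k, lam k * t k ≤ ∑ k ∈ F, lam k := by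
  classical
  have hterm : ∀ k, (lam k - c) * (t k - if k ∈ F then 1 else 0) ≤ 0 := by
    intro k
    by_cases hk : k ∈ F
    · simpa [hk] using mul_nonpos_of_nonneg_of_nonpos (sub_nonneg.2 (hF k hk))
        (sub_nonpos.2 (ht1 k))
    · simpa [hk] using mul_nonpos_of_nonpos_of_nonneg (sub_nonpos.2 (hFc k hk)) (ht0 k)
  have hexpand : ∑ k, (lam k - c) * (t k - if k ∈ F then 1 else 0)
      = ∑ k, lam k * t k - ∑ k ∈ F, lam k - c * (∑ k, t k - #F) := by
    simp only [sub_mul, mul_sub, mul_ite, mul_one, mul_zero, sum_sub_distrib,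
      sum_ite_mem, univ_inter, ← mul_sum, sum_const, nsmul_eq_mul]
    ring
  have := sum_nonpos fun k (_ : k ∈ univ) => hterm k
  rw [hexpand, hsum, sub_self, mul_zero, sub_zero] at this
  linarith

section WeightedInnerProduct

variable {ι : Type*} [Fintype ι] {W : Matrix ι ι ℝ}

def OrthonormalWrt (W : Matrix ι ι ℝ) {κ : Type*} [DecidableEq κ] (v : κ → ι → ℝ) : Prop :=
  ∀ i j, v i ⬝ᵥ W *ᵥ v j = if i = j then 1 else 0

lemma Matrix.IsSymm.dotProduct_mulVec_comm (hW : W.IsSymm) (x y : ι → ℝ) :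
    x ⬝ᵥ W *ᵥ y = y ⬝ᵥ W *ᵥ x := by
  rw [dotProduct_mulVec, ← mulVec_transpose, hW.eq, dotProduct_comm]

lemma sum_smul_dotProduct_mulVec {κ : Type*} (s : Finset κ) (c : κ → ℝ) (v : κ → ι → ℝ)
    (y : ι → ℝ) :
    (∑ i ∈ s, c i • v i) ⬝ᵥ W *ᵥ y = ∑ i ∈ s, c i * (v i ⬝ᵥ W *ᵥ y) := by
  simp only [sum_dotProduct, smul_dotProduct, smul_eq_mul]

lemma dotProduct_mulVec_sum_smul {κ : Type*} (s : Finset κ) (x : ι → ℝ) (c : κ → ℝ)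
    (v : κ → ι → ℝ) :
    x ⬝ᵥ W *ᵥ (∑ i ∈ s, c i • v i) = ∑ i ∈ s, c i * (x ⬝ᵥ W *ᵥ v i) := by
  simp only [mulVec_sum, mulVec_smul, dotProduct_sum, dotProduct_smul, smul_eq_mul]

namespace OrthonormalWrt

variable {κ : Type*} [DecidableEq κ] {v : κ → ι → ℝ}

lemma self (hv : OrthonormalWrt W v) (i : κ) : v i ⬝ᵥ W *ᵥ v i = 1 := by
  simpa using hv i i

lemma sum_smul_dotProduct_mulVec_of_mem (hv : OrthonormalWrt W v) (s : Finset κ) (c : κ → ℝ)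
    {k : κ} (hk : k ∈ s) : (∑ i ∈ s, c i • v i) ⬝ᵥ W *ᵥ v k = c k := by
  simp [sum_smul_dotProduct_mulVec, hv _ k, hk]

lemma dotProduct_mulVec_sum_smul_of_mem (hv : OrthonormalWrt W v) (s : Finset κ) (c : κ → ℝ)
    {k : κ} (hk : k ∈ s) : v k ⬝ᵥ W *ᵥ (∑ i ∈ s, c i • v i) = c k := by
  simp [dotProduct_mulVec_sum_smul, hv k, hk]

lemma residual_dotProduct_mulVec_self (hW : W.IsSymm) (hv : OrthonormalWrt W v)
    (s : Finset κ) (x : ι → ℝ) :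
    (x - ∑ i ∈ s, (x ⬝ᵥ W *ᵥ v i) • v i) ⬝ᵥ W *ᵥ (x - ∑ i ∈ s, (x ⬝ᵥ W *ᵥ v i) • v i)
      = x ⬝ᵥ W *ᵥ x - ∑ i ∈ s, (x ⬝ᵥ W *ᵥ v i) ^ 2 := by
  set p := ∑ i ∈ s, (x ⬝ᵥ W *ᵥ v i) • v i
  have hxp : x ⬝ᵥ W *ᵥ p = ∑ i ∈ s, (x ⬝ᵥ W *ᵥ v i) ^ 2 := by
    simp only [p, dotProduct_mulVec_sum_smul, sq]
  have hpp : p ⬝ᵥ W *ᵥ p = ∑ i ∈ s, (x ⬝ᵥ W *ᵥ v i) ^ 2 := by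
    simp only [p, dotProduct_mulVec_sum_smul, sq]
    exact sum_congr rfl fun i hi => by rw [hv.sum_smul_dotProduct_mulVec_of_mem s _ hi]
  rw [mulVec_sub, sub_dotProduct, dotProduct_sub, dotProduct_sub, hxp, hpp,
    hW.dotProduct_mulVec_comm p x, hxp]
  ring

lemma sum_sq_le (hW : W.PosSemidef) (hv : OrthonormalWrt W v) (s : Finset κ) (x : ι → ℝ) :
    ∑ i ∈ s, (x ⬝ᵥ W *ᵥ v i) ^ 2 ≤ x ⬝ᵥ W *ᵥ x := by
  have hres := hW.dotProduct_mulVec_nonneg (x - ∑ i ∈ s, (x ⬝ᵥ W *ᵥ v i) • v i)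
  rw [star_trivial, hv.residual_dotProduct_mulVec_self
    (isHermitian_iff_isSymm.mp hW.isHermitian)] at hres
  linarith

variable [Fintype κ]

lemma eq_sum_smul (hv : OrthonormalWrt W v) (hspan : Submodule.span ℝ (Set.range v) = ⊤)
    (x : ι → ℝ) : x = ∑ k, (x ⬝ᵥ W *ᵥ v k) • v k := by
  obtain ⟨c, rfl⟩ := (Submodule.mem_span_range_iff_exists_fun ℝ).1
    (hspan ▸ Submodule.mem_top : x ∈ Submodule.span ℝ (Set.range v))
  simp only [hv.sum_smul_dotProduct_mulVec_of_mem univ c (mem_univ _)]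

lemma dotProduct_mulVec_self_eq_sum_sq (hv : OrthonormalWrt W v)
    (hspan : Submodule.span ℝ (Set.range v) = ⊤) (x : ι → ℝ) :
    x ⬝ᵥ W *ᵥ x = ∑ k, (x ⬝ᵥ W *ᵥ v k) ^ 2 := by
  conv_lhs => rw [hv.eq_sum_smul hspan x]
  simp only [sum_smul_dotProduct_mulVec, hv.dotProduct_mulVec_sum_smul_of_mem univ _
    (mem_univ _), sq]

end OrthonormalWrt

end WeightedInnerProduct

section POD

variable {ι J : Type*} [Fintype ι] [Fintype J] (W : Matrix ι ι ℝ) (α : J → ℝ) (z : J → ι → ℝ)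

def podOperator (v : ι → ℝ) : ι → ℝ :=
  ∑ j, (α j * (v ⬝ᵥ W *ᵥ z j)) • z j

def podEnergy (v : ι → ℝ) : ℝ :=
  ∑ j, α j * (z j ⬝ᵥ W *ᵥ v) ^ 2

variable {W α z}

lemma podOperator_dotProduct_mulVec (hW : W.IsSymm) (u v : ι → ℝ) :
    podOperator W α z u ⬝ᵥ W *ᵥ v = ∑ j, α j * (z j ⬝ᵥ W *ᵥ u) * (z j ⬝ᵥ W *ᵥ v) := by
  simp only [podOperator, sum_smul_dotProduct_mulVec, hW.dotProduct_mulVec_comm u]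

lemma pod_error_eq (hW : W.IsSymm) {κ : Type*} [DecidableEq κ] {v : κ → ι → ℝ}
    (hv : OrthonormalWrt W v) (s : Finset κ) :
    ∑ j, α j * ((z j - ∑ i ∈ s, (z j ⬝ᵥ W *ᵥ v i) • v i) ⬝ᵥ
        W *ᵥ (z j - ∑ i ∈ s, (z j ⬝ᵥ W *ᵥ v i) • v i))
      = ∑ j, α j * (z j ⬝ᵥ W *ᵥ z j) - ∑ i ∈ s, podEnergy W α z (v i) := by
  simp only [hv.residual_dotProduct_mulVec_self hW, podEnergy, mul_sub, mul_sum,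
    sum_sub_distrib]
  rw [sum_comm]

variable {β : Type*} [Fintype β] [DecidableEq β] {ψ : β → ι → ℝ} {lam : β → ℝ}

lemma podEnergy_eq_sum_eigenvalue_mul_sq (hW : W.IsSymm) (hψ : OrthonormalWrt W ψ)
    (hspan : Submodule.span ℝ (Set.range ψ) = ⊤)
    (heig : ∀ k, podOperator W α z (ψ k) = lam k • ψ k) (v : ι → ℝ) :
    podEnergy W α z v = ∑ k, lam k * (v ⬝ᵥ W *ᵥ ψ k) ^ 2 := by
  have hcoord : ∀ j, z j ⬝ᵥ W *ᵥ v = ∑ k, (v ⬝ᵥ W *ᵥ ψ k) * (z j ⬝ᵥ W *ᵥ ψ k) := by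
    intro j
    conv_lhs => rw [hψ.eq_sum_smul hspan v]
    rw [dotProduct_mulVec_sum_smul]
  have hmode : ∀ k, ∑ j, α j * (z j ⬝ᵥ W *ᵥ ψ k) * (z j ⬝ᵥ W *ᵥ v)
      = lam k * (v ⬝ᵥ W *ᵥ ψ k) := by
    intro k
    rw [← podOperator_dotProduct_mulVec hW, heig, smul_dotProduct, smul_eq_mul,
      hW.dotProduct_mulVec_comm (ψ k)]
  calc podEnergy W α z v
      = ∑ j, α j * (∑ k, (v ⬝ᵥ W *ᵥ ψ k) * (z j ⬝ᵥ W *ᵥ ψ k)) * (z j ⬝ᵥ W *ᵥ v) := by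
        simp only [podEnergy, sq, ← hcoord, mul_assoc]
    _ = ∑ k, (v ⬝ᵥ W *ᵥ ψ k) * ∑ j, α j * (z j ⬝ᵥ W *ᵥ ψ k) * (z j ⬝ᵥ W *ᵥ v) := by
        simp only [mul_sum, sum_mul]
        rw [sum_comm]
        exact sum_congr rfl fun _ _ => sum_congr rfl fun _ _ => by ring
    _ = ∑ k, lam k * (v ⬝ᵥ W *ᵥ ψ k) ^ 2 := by
        simp only [hmode]
        exact sum_congr rfl fun _ _ => by ring

lemma sum_podEnergy_le_sum_eigenvalues (hW : W.PosSemidef) (hψ : OrthonormalWrt W ψ)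
    (hspan : Submodule.span ℝ (Set.range ψ) = ⊤)
    (heig : ∀ k, podOperator W α z (ψ k) = lam k • ψ k)
    {κ : Type*} [Fintype κ] [DecidableEq κ] {φ : κ → ι → ℝ} (hφ : OrthonormalWrt W φ)
    (F : Finset β) (hcard : #F = Fintype.card κ) (c : ℝ)
    (hF : ∀ k ∈ F, c ≤ lam k) (hFc : ∀ k ∉ F, lam k ≤ c) :
    ∑ i, podEnergy W α z (φ i) ≤ ∑ k ∈ F, lam k := by
  have hWsymm : W.IsSymm := isHermitian_iff_isSymm.mp hW.isHermitian
  set t : β → ℝ := fun k => ∑ i, (φ i ⬝ᵥ W *ᵥ ψ k) ^ 2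
  have ht0 : ∀ k, 0 ≤ t k := fun k => sum_nonneg fun i _ => sq_nonneg _
  have ht1 : ∀ k, t k ≤ 1 := by
    intro k
    simpa only [t, hWsymm.dotProduct_mulVec_comm (ψ k), hψ.self] using
      hφ.sum_sq_le hW univ (ψ k)
  have hsum : ∑ k, t k = #F := by
    simp only [t]
    rw [sum_comm]
    simp only [← hψ.dotProduct_mulVec_self_eq_sum_sq hspan, hφ.self, sum_const, card_univ,
      hcard, nsmul_eq_mul, mul_one]
  calc ∑ i, podEnergy W α z (φ i)
      = ∑ k, lam k * t k := by
        simp only [podEnergy_eq_sum_eigenvalue_mul_sq hWsymm hψ hspan heig, t, mul_sum]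
        exact sum_comm
    _ ≤ ∑ k ∈ F, lam k := sum_mul_le_sum_of_separated F lam t c hF hFc ht0 ht1 hsum

end POD

theorem pod_basis_optimality_general
    (m n ℓ : ℕ) (hm : 0 < m) (hℓm : ℓ ≤ m)
    (z : Fin n → (Fin m → ℝ)) (α : Fin n → ℝ)
    (W : Matrix (Fin m) (Fin m) ℝ) (hWsymm : W.IsSymm) (hWpos : W.PosDef)
    (R : (Fin m → ℝ) → (Fin m → ℝ))
    (hR : ∀ ψ : Fin m → ℝ, R ψ = ∑ j : Fin n, (α j * (ψ ⬝ᵥ W.mulVec (z j))) • z j)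
    (ψ : Fin m → (Fin m → ℝ)) (lam : Fin m → ℝ)
    (hbasis : Submodule.span ℝ (Set.range ψ) = ⊤)
    (hortho : ∀ i j : Fin m, (ψ i) ⬝ᵥ W.mulVec (ψ j) = if i = j then 1 else 0)
    (heig : ∀ i : Fin m, R (ψ i) = lam i • ψ i)
    (hdesc : ∀ i j : Fin m, i ≤ j → lam j ≤ lam i)
    (φ : Fin ℓ → (Fin m → ℝ))
    (hφortho : ∀ i j : Fin ℓ, (φ i) ⬝ᵥ W.mulVec (φ j) = if i = j then 1 else 0) :
    ∑ j : Fin n, α j *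
        ((z j - ∑ i ∈ Finset.univ.filter (fun i : Fin m => (i : ℕ) < ℓ),
            ((z j) ⬝ᵥ W.mulVec (ψ i)) • ψ i) ⬝ᵥ
          W.mulVec (z j - ∑ i ∈ Finset.univ.filter (fun i : Fin m => (i : ℕ) < ℓ),
            ((z j) ⬝ᵥ W.mulVec (ψ i)) • ψ i))
      ≤ ∑ j : Fin n, α j *
          ((z j - ∑ i : Fin ℓ, ((z j) ⬝ᵥ W.mulVec (φ i)) • φ i) ⬝ᵥ
            W.mulVec (z j - ∑ i : Fin ℓ, ((z j) ⬝ᵥ W.mulVec (φ i)) • φ i)) := by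
  obtain rfl : R = podOperator W α z := funext hR
  set F := univ.filter fun i : Fin m => (i : ℕ) < ℓ
  have hcard : #F = Fintype.card (Fin ℓ) := by
    rw [Fintype.card_fin, Fin.card_filter_val_lt, min_eq_right hℓm]
  have henergy : ∀ k, podEnergy W α z (ψ k) = lam k := fun k => by
    simp [podEnergy_eq_sum_eigenvalue_mul_sq hWsymm hortho hbasis heig, hortho k]
  rw [pod_error_eq hWsymm hortho, pod_error_eq hWsymm hφortho, sum_congr rfl fun k _ => henergy k]
  gcongr _ - ?_
  -- the eigenvalue `λ_ℓ` separates the `ℓ` largest eigenvalues from the others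
  refine sum_podEnergy_le_sum_eigenvalues hWpos.posSemidef hortho hbasis heig hφortho F hcard
    (lam ⟨ℓ - 1, by omega⟩) (fun k hk => hdesc _ _ ?_) (fun k hk => hdesc _ _ ?_) <;>
    simp only [F, mem_filter, mem_univ, true_and, not_lt, Fin.le_def] at hk ⊢ <;> omega

/-- Optimality of the POD basis: if `ψ₁, …, ψ_m` is a
`W`-orthonormal eigenbasis of `ℛ` with eigenvalues in nonincreasing order, then
for every `W`-orthonormal family `φ₁, …, φ_ℓ`, the mean square POD error of the
first `ℓ` eigenvectors is at most that of `φ₁, …, φ_ℓ`. -/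
theorem pod_basis_optimality
    (m n ℓ : ℕ) (hm : 0 < m) (hn : 0 < n) (hℓ : 1 ≤ ℓ) (hℓm : ℓ ≤ m)
    (z : Fin n → (Fin m → ℝ)) (α : Fin n → ℝ) (hα : ∀ j, 0 < α j)
    (W : Matrix (Fin m) (Fin m) ℝ) (hWsymm : W.IsSymm) (hWpos : W.PosDef)
    (R : (Fin m → ℝ) → (Fin m → ℝ))
    (hR : ∀ ψ : Fin m → ℝ, R ψ = ∑ j : Fin n, (α j * (ψ ⬝ᵥ W.mulVec (z j))) • z j)
    (ψ : Fin m → (Fin m → ℝ)) (lam : Fin m → ℝ)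
    (hbasis : Submodule.span ℝ (Set.range ψ) = ⊤)
    (hortho : ∀ i j : Fin m, (ψ i) ⬝ᵥ W.mulVec (ψ j) = if i = j then 1 else 0)
    (heig : ∀ i : Fin m, R (ψ i) = lam i • ψ i)
    (hdesc : ∀ i j : Fin m, i ≤ j → lam j ≤ lam i)
    (φ : Fin ℓ → (Fin m → ℝ))
    (hφortho : ∀ i j : Fin ℓ, (φ i) ⬝ᵥ W.mulVec (φ j) = if i = j then 1 else 0) :
    ∑ j : Fin n, α j *
        ((z j - ∑ i ∈ Finset.univ.filter (fun i : Fin m => (i : ℕ) < ℓ),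
            ((z j) ⬝ᵥ W.mulVec (ψ i)) • ψ i) ⬝ᵥ
          W.mulVec (z j - ∑ i ∈ Finset.univ.filter (fun i : Fin m => (i : ℕ) < ℓ),
            ((z j) ⬝ᵥ W.mulVec (ψ i)) • ψ i))
      ≤ ∑ j : Fin n, α j *
          ((z j - ∑ i : Fin ℓ, ((z j) ⬝ᵥ W.mulVec (φ i)) • φ i) ⬝ᵥ
            W.mulVec (z j - ∑ i : Fin ℓ, ((z j) ⬝ᵥ W.mulVec (φ i)) • φ i)) :=
  pod_basis_optimality_general m n ℓ hm hℓm z α W hWsymm hWpos R hR ψ lam hbasis hortho heig hdesc φ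
    hφortho
end
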